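/- arXiv:2005.12175 — 4 statements merged into one kernel-verified Lean document; each statement's English description precedes it below -/
import Mathlib

section
/- Lemma 2 (synth-apprx): Let f : Γ₁ × Γ₂ → A be a positional Player 1 strategy and let σ : ℕ → S be a trace in the surely language L_{π(f)} of the plant under the induced policy π(f). Then there exists a Player 2 strategy g : ℕ → Γ₂ (namely g(n) = γ₂(σ(n))) such that the play of f and g from γ₁(s₀) is legal and equals the sequence n ↦ γ₁(σ(n)). -/
/-- The play of Player 1 strategy `f` and Player 2 strategy `g` from the initial
abstract vertex `init`: `ρ(0) = init` and `ρ(n+1) = δ(ρ(n), f(ρ(n), g(n)), g(n))`. -/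
def play {S A : Type*} {Γ₁ Γ₂ : Set (Set S)} (δ : Γ₁ → A → Γ₂ → Γ₁)
    (f : Γ₁ → Γ₂ → A) (g : ℕ → Γ₂) (init : Γ₁) : ℕ → Γ₁
  | 0 => init
  | n + 1 => δ (play δ f g init n) (f (play δ f g init n) (g n)) (g n)

/-!
By soundness, every concrete successor of `σ n` lies in the abstract successor of the pair of
blocks containing `σ n`; since `Γ₁` is a partition, that abstract successor is then the block
of `σ (n + 1)`. Induction on `n` shows that Player 2 choosing `γ₂ (σ n)` makes the play follow
`γ₁ ∘ σ`, and the play is legal because `σ n` lies in both `γ₁ (σ n)` and `γ₂ (σ n)`.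
-/

section

variable {S A : Type*} {Γ₁ Γ₂ : Set (Set S)} {δ : Γ₁ → A → Γ₂ → Γ₁}

theorem sound_successor_eq_block {supp : S → A → Set S} {γ₁ : S → Γ₁} {γ₂ : S → Γ₂}
    (hγ₁mem : ∀ s : S, s ∈ (γ₁ s : Set S))
    (hγ₁uniq : ∀ (s : S) (B : Γ₁), s ∈ (B : Set S) → B = γ₁ s)
    (hγ₂mem : ∀ s : S, s ∈ (γ₂ s : Set S))
    (hsound : ∀ (B₁ : Γ₁) (a : A) (B₂ : Γ₂) (s : S),
      s ∈ (B₁ : Set S) → s ∈ (B₂ : Set S) → supp s a ⊆ (δ B₁ a B₂ : Set S))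
    {s t : S} {a : A} (ht : t ∈ supp s a) :
    δ (γ₁ s) a (γ₂ s) = γ₁ t :=
  hγ₁uniq t _ (hsound _ a _ s (hγ₁mem s) (hγ₂mem s) ht)

theorem play_eq_of_step_eq {f : Γ₁ → Γ₂ → A} {σ : ℕ → S} {γ₁ : S → Γ₁} {γ₂ : S → Γ₂}
    (hstep : ∀ n, δ (γ₁ (σ n)) (f (γ₁ (σ n)) (γ₂ (σ n))) (γ₂ (σ n)) = γ₁ (σ (n + 1)))
    (n : ℕ) : play δ f (fun n => γ₂ (σ n)) (γ₁ (σ 0)) n = γ₁ (σ n) := by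
  induction n with
  | zero => rfl
  | succ n ih => rw [play, ih, hstep]

end

/-- Lemma 2, synth-apprx: for a positional Player 1 strategy `f` and
a trace `σ ∈ L_{π(f)}` of the plant under the induced policy `π(f)(s) = f(γ₁(s), γ₂(s))`,
there is a Player 2 strategy `g` (namely `g(n) = γ₂(σ(n))`) such that the play of `f`
and `g` from `γ₁(s₀)` is legal and equals `n ↦ γ₁(σ(n))`. -/
theorem synth_apprx {S A : Type*} {Γ₁ Γ₂ : Set (Set S)}
    (s₀ : S) (supp : S → A → Set S)
    (γ₁ : S → Γ₁) (γ₂ : S → Γ₂)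
    (hγ₁mem : ∀ s : S, s ∈ (γ₁ s : Set S))
    (hγ₁uniq : ∀ (s : S) (B : Γ₁), s ∈ (B : Set S) → B = γ₁ s)
    (hγ₂mem : ∀ s : S, s ∈ (γ₂ s : Set S))
    (δ : Γ₁ → A → Γ₂ → Γ₁)
    (hsound : ∀ (B₁ : Γ₁) (a : A) (B₂ : Γ₂) (s : S),
      s ∈ (B₁ : Set S) → s ∈ (B₂ : Set S) → supp s a ⊆ (δ B₁ a B₂ : Set S))
    (f : Γ₁ → Γ₂ → A)
    (σ : ℕ → S) (hσ0 : σ 0 = s₀)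
    (hσ : ∀ n : ℕ, σ (n + 1) ∈ supp (σ n) (f (γ₁ (σ n)) (γ₂ (σ n)))) :
    ∃ g : ℕ → Γ₂, g = (fun n => γ₂ (σ n)) ∧
      (∀ n : ℕ, ((play δ f g (γ₁ s₀) n : Set S) ∩ (g n : Set S)).Nonempty) ∧
      (∀ n : ℕ, play δ f g (γ₁ s₀) n = γ₁ (σ n)) := by
  subst hσ0
  have htracks := play_eq_of_step_eq (f := f) fun n =>
    sound_successor_eq_block hγ₁mem hγ₁uniq hγ₂mem hsound (hσ n)
  refine ⟨_, rfl, fun n => ⟨σ n, ?_, hγ₂mem (σ n)⟩, htracks⟩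
  rw [htracks n]
  exact hγ₁mem (σ n)
end

section
/- Let Ω be a set of infinite sequences over Γ₁ and let f : Γ₁ × Γ₂ → A be a winning positional Player 1 strategy, i.e., for every Player 2 strategy g : ℕ → Γ₂ whose play with f is legal, the play of f and g is in Ω. Then for every trace σ ∈ L_{π(f)} of the plant under the induced policy π(f), the abstracted sequence n ↦ γ₁(σ(n)) is in Ω. -/
section Shadow

variable {S A : Type*} {Γ₁ Γ₂ : Set (Set S)} (δ : Γ₁ → A → Γ₂ → Γ₁) (f : Γ₁ → Γ₂ → A)
  (γ₁ : S → Γ₁) (γ₂ : S → Γ₂) (σ : ℕ → S)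

theorem play_shadow_eq
    (hγ₁uniq : ∀ (s : S) (B : Γ₁), s ∈ (B : Set S) → B = γ₁ s)
    (hstep : ∀ n, σ (n + 1) ∈ (δ (γ₁ (σ n)) (f (γ₁ (σ n)) (γ₂ (σ n))) (γ₂ (σ n)) : Set S))
    (n : ℕ) : play δ f (fun k => γ₂ (σ k)) (γ₁ (σ 0)) n = γ₁ (σ n) := by
  induction n with
  | zero => rfl
  | succ n ih =>
    rw [play, ih]
    exact hγ₁uniq _ _ (hstep n)

theorem play_shadow_legal
    (hγ₁mem : ∀ s : S, s ∈ (γ₁ s : Set S)) (hγ₂mem : ∀ s : S, s ∈ (γ₂ s : Set S))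
    (hplay : ∀ n, play δ f (fun k => γ₂ (σ k)) (γ₁ (σ 0)) n = γ₁ (σ n)) (n : ℕ) :
    ((play δ f (fun k => γ₂ (σ k)) (γ₁ (σ 0)) n : Set S) ∩ (γ₂ (σ n) : Set S)).Nonempty :=
  ⟨σ n, by rw [hplay n]; exact hγ₁mem _, hγ₂mem _⟩

end Shadow

/-- multi-agent synthesis: if `f` is a winning positional Player 1
strategy — every legal play of `f` against any Player 2 strategy `g` is in `Ω` —
then for every trace `σ ∈ L_{π(f)}` of the plant under the induced policy
`π(f)(s) = f(γ₁(s), γ₂(s))`, the abstracted sequence `n ↦ γ₁(σ(n))` is in `Ω`. -/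
theorem winning_strategy_correct {S A : Type*} {Γ₁ Γ₂ : Set (Set S)}
    (s₀ : S) (supp : S → A → Set S)
    (γ₁ : S → Γ₁) (γ₂ : S → Γ₂)
    (hγ₁mem : ∀ s : S, s ∈ (γ₁ s : Set S))
    (hγ₁uniq : ∀ (s : S) (B : Γ₁), s ∈ (B : Set S) → B = γ₁ s)
    (hγ₂mem : ∀ s : S, s ∈ (γ₂ s : Set S))
    (δ : Γ₁ → A → Γ₂ → Γ₁)
    (hsound : ∀ (B₁ : Γ₁) (a : A) (B₂ : Γ₂) (s : S),
      s ∈ (B₁ : Set S) → s ∈ (B₂ : Set S) → supp s a ⊆ (δ B₁ a B₂ : Set S))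
    (Ω : Set (ℕ → Γ₁)) (f : Γ₁ → Γ₂ → A)
    (hwin : ∀ g : ℕ → Γ₂,
      (∀ n : ℕ, ((play δ f g (γ₁ s₀) n : Set S) ∩ (g n : Set S)).Nonempty) →
      (fun n => play δ f g (γ₁ s₀) n) ∈ Ω)
    (σ : ℕ → S) (hσ0 : σ 0 = s₀)
    (hσ : ∀ n : ℕ, σ (n + 1) ∈ supp (σ n) (f (γ₁ (σ n)) (γ₂ (σ n)))) :
    (fun n => γ₁ (σ n)) ∈ Ω := by
  subst hσ0
  have hstep : ∀ n, σ (n + 1) ∈ (δ (γ₁ (σ n)) (f (γ₁ (σ n)) (γ₂ (σ n))) (γ₂ (σ n)) : Set S) :=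
    fun n => hsound _ _ _ _ (hγ₁mem _) (hγ₂mem _) (hσ n)
  have hplay := play_shadow_eq δ f γ₁ γ₂ σ hγ₁uniq hstep
  have hwon := hwin _ (play_shadow_legal δ f γ₁ γ₂ σ hγ₁mem hγ₂mem hplay)
  simpa only [hplay] using hwon
end

section
/- Let MB : S → A be a policy that is constant on each block of Γ₂, with a(γ₂) denoting its common value on the block γ₂ ∈ Γ₂. Fix ℓ ∈ ℕ, a specification Ω on length-(ℓ+1) sequences over Γ₁, and x ∈ ℕ, and let f : Γ₁ × Γ₂ → A be a positional Player 1 strategy such that for every Player 2 strategy g : ℕ → Γ₂ whose play ρ with f is legal for the first ℓ steps: (ρ(0),…,ρ(ℓ)) ∈ Ω and the number of indices n < ℓ with f(ρ(n), g(n)) = a(g(n)) is at least x. Then for every sequence σ : ℕ → S in the surely language L_{π(f)}: (i) (γ₁(σ(0)),…,γ₁(σ(ℓ))) ∈ Ω, and (ii) the number of indices n < ℓ with π(f)(σ(n)) = MB(σ(n)) is at least x. -/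
section Simulation

variable {S A : Type*} {Γ₁ Γ₂ : Set (Set S)} {supp : S → A → Set S}
  {γ₁ : S → Γ₁} {δ : Γ₁ → A → Γ₂ → Γ₁} {f : Γ₁ → Γ₂ → A} {g : ℕ → Γ₂} {σ : ℕ → S}

theorem play_eq_γ₁_of_trace
    (hγ₁mem : ∀ s : S, s ∈ (γ₁ s : Set S))
    (hγ₁uniq : ∀ (s : S) (B : Γ₁), s ∈ (B : Set S) → B = γ₁ s)
    (hsound : ∀ (B₁ : Γ₁) (a : A) (B₂ : Γ₂) (s : S),
      s ∈ (B₁ : Set S) → s ∈ (B₂ : Set S) → supp s a ⊆ (δ B₁ a B₂ : Set S))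
    (hg : ∀ n, σ n ∈ (g n : Set S))
    (hσ : ∀ n, σ (n + 1) ∈ supp (σ n) (f (γ₁ (σ n)) (g n))) (n : ℕ) :
    play δ f g (γ₁ (σ 0)) n = γ₁ (σ n) := by
  induction n with
  | zero => rfl
  | succ n ih =>
    rw [play, ih]
    exact hγ₁uniq _ _ (hsound _ _ _ _ (hγ₁mem (σ n)) (hg n) (hσ n))

theorem play_legal_of_trace
    (hγ₁mem : ∀ s : S, s ∈ (γ₁ s : Set S))
    (hplay : ∀ n, play δ f g (γ₁ (σ 0)) n = γ₁ (σ n))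
    (hg : ∀ n, σ n ∈ (g n : Set S)) (n : ℕ) :
    ((play δ f g (γ₁ (σ 0)) n : Set S) ∩ (g n : Set S)).Nonempty :=
  ⟨σ n, by rw [hplay n]; exact hγ₁mem (σ n), hg n⟩

end Simulation

open scoped Classical in
/-- following expert advice: if the Player 1 strategy `f` guarantees,
against every Player 2 strategy `g` whose play is legal for the first `ℓ` steps, that
the play prefix is in `Ω` and that `f` agrees with the action `a(g(n))` suggested by
Player 2 at least `x` times among `n < ℓ`, then every plant trace `σ ∈ L_{π(f)}` has
its abstraction `(γ₁(σ(0)),…,γ₁(σ(ℓ)))` in `Ω`, and `π(f)` agrees with the magic book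
`MB` at least `x` times among the first `ℓ` steps of `σ`. -/
theorem following_expert_advice {S A : Type*} {Γ₁ Γ₂ : Set (Set S)}
    (s₀ : S) (supp : S → A → Set S)
    (γ₁ : S → Γ₁) (γ₂ : S → Γ₂)
    (hγ₁mem : ∀ s : S, s ∈ (γ₁ s : Set S))
    (hγ₁uniq : ∀ (s : S) (B : Γ₁), s ∈ (B : Set S) → B = γ₁ s)
    (hγ₂mem : ∀ s : S, s ∈ (γ₂ s : Set S))
    (δ : Γ₁ → A → Γ₂ → Γ₁)
    (hsound : ∀ (B₁ : Γ₁) (a : A) (B₂ : Γ₂) (s : S),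
      s ∈ (B₁ : Set S) → s ∈ (B₂ : Set S) → supp s a ⊆ (δ B₁ a B₂ : Set S))
    (MB : S → A) (act : Γ₂ → A) (hMB : ∀ s : S, MB s = act (γ₂ s))
    (ℓ : ℕ) (Ω : Set (Fin (ℓ + 1) → Γ₁)) (x : ℕ)
    (f : Γ₁ → Γ₂ → A)
    (hf : ∀ g : ℕ → Γ₂,
      (∀ n < ℓ, ((play δ f g (γ₁ s₀) n : Set S) ∩ (g n : Set S)).Nonempty) →
      ((fun i : Fin (ℓ + 1) => play δ f g (γ₁ s₀) i) ∈ Ω ∧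
        x ≤ ((Finset.range ℓ).filter
          (fun n => f (play δ f g (γ₁ s₀) n) (g n) = act (g n))).card))
    (σ : ℕ → S) (hσ0 : σ 0 = s₀)
    (hσ : ∀ n : ℕ, σ (n + 1) ∈ supp (σ n) (f (γ₁ (σ n)) (γ₂ (σ n)))) :
    (fun i : Fin (ℓ + 1) => γ₁ (σ i)) ∈ Ω ∧
    x ≤ ((Finset.range ℓ).filter
      (fun n => f (γ₁ (σ n)) (γ₂ (σ n)) = MB (σ n))).card := by
  subst hσ0
  have hg : ∀ n, σ n ∈ (γ₂ (σ n) : Set S) := fun n => hγ₂mem (σ n)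
  have hplay := play_eq_γ₁_of_trace hγ₁mem hγ₁uniq hsound hg hσ
  obtain ⟨hΩ, hcount⟩ :=
    hf (fun n => γ₂ (σ n)) fun n _ => play_legal_of_trace hγ₁mem hplay hg n
  simp only [hplay, ← hMB] at hΩ hcount
  exact ⟨hΩ, hcount⟩
end

section
/- Theorem 3 (semantic core of the BMC-to-SMT reduction): Let S be a set of plant states with initial state s₀, A a set of actions, supp : S × A → Set S, T a decision tree over S with actions A inducing the policy π_T(s) = eval(T,s), ℓ ∈ ℕ a bound, and Ω a set of length-(ℓ+1) sequences over S. Then a pair of sequences x : Fin(ℓ+1) → S and y : Fin ℓ → A satisfies the constraints (1) x(0) = s₀, (2) x(i+1) ∈ supp(x(i), y(i)) for all i < ℓ, (3) for all i < ℓ and all a ∈ A, if x(i) satisfies the disjunction of pred(η) over root-to-leaf paths η of T ending in a leaf labeled a, then y(i) = a, and (4) x ∈ Ω, if and only if x is a length-ℓ run in the surely language L_{π_T} that lies in Ω and y(i) = π_T(x(i)) for all i < ℓ. -/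
/-! The states satisfying the disjunction of the path predicates of the `a`-labelled leaves
are exactly those at which the tree evaluates to `a`, so constraint (3) pins `y i` to
`π_T (x i)`; constraints (2) and (4) then say that `x` is a run of `π_T` lying in `Ω`. -/

/-- A decision tree over states `S` with actions `A`: either a leaf labeled by an
action, or an internal node labeled by a (decidable, i.e. Boolean) predicate on `S`
with two subtrees (the first followed when the predicate holds, the second when it fails). -/
inductive DTree (S A : Type*) where
  | leaf : A → DTree S A
  | node : (S → Bool) → DTree S A → DTree S A → DTree S A

/-- A root-to-leaf path: a sequence of predicates together with the prescribed truth
value at each one, ending in a leaf labeled by an action. -/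
inductive DPath (S A : Type*) where
  | leaf : A → DPath S A
  | node : (S → Bool) → Bool → DPath S A → DPath S A

namespace DTree

variable {S A : Type*}

/-- Evaluating the tree at a state: output the action labeling the reached leaf. -/
def eval : DTree S A → S → A
  | .leaf a, _ => a
  | .node φ t₁ t₂, s => if φ s then t₁.eval s else t₂.eval s

/-- The unique root-to-leaf path traversed by a state, recording the truth values of
the predicates encountered. -/
def path : DTree S A → S → DPath S A
  | .leaf a, _ => .leaf a
  | .node φ t₁ t₂, s => .node φ (φ s) (if φ s then t₁.path s else t₂.path s)

end DTree

namespace DPath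

variable {S A : Type*}

/-- The path predicate `pred η`: the conjunction of the predicates along `η`,
negated (i.e. required to be false) on branches where the path takes the false child. -/
def pred : DPath S A → S → Prop
  | .leaf _, _ => True
  | .node φ b η, s => φ s = b ∧ η.pred s

/-- The action labeling the leaf at the end of the path. -/
def action : DPath S A → A
  | .leaf a => a
  | .node _ _ η => η.action

/-- `η.IsPathOf T` holds when `η` is a root-to-leaf path of the tree `T`. -/
inductive IsPathOf : DPath S A → DTree S A → Prop
  | leaf (a : A) : IsPathOf (.leaf a) (.leaf a)
  | node_true {φ : S → Bool} {t₁ t₂ : DTree S A} {η : DPath S A} :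
      IsPathOf η t₁ → IsPathOf (.node φ true η) (.node φ t₁ t₂)
  | node_false {φ : S → Bool} {t₁ t₂ : DTree S A} {η : DPath S A} :
      IsPathOf η t₂ → IsPathOf (.node φ false η) (.node φ t₁ t₂)

end DPath

namespace DTree

variable {S A : Type*}

theorem path_isPathOf (T : DTree S A) (s : S) : (T.path s).IsPathOf T := by
  induction T with
  | leaf a => exact .leaf a
  | node φ t₁ t₂ ih₁ ih₂ =>
    cases h : φ s
    · simpa [path, h] using DPath.IsPathOf.node_false ih₂
    · simpa [path, h] using DPath.IsPathOf.node_true ih₁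

theorem action_path (T : DTree S A) (s : S) : (T.path s).action = T.eval s := by
  induction T with
  | leaf a => rfl
  | node φ t₁ t₂ ih₁ ih₂ => cases h : φ s <;> simp [path, eval, DPath.action, h, ih₁, ih₂]

theorem pred_path (T : DTree S A) (s : S) : (T.path s).pred s := by
  induction T with
  | leaf a => trivial
  | node φ t₁ t₂ ih₁ ih₂ => cases h : φ s <;> simp [path, DPath.pred, h, ih₁, ih₂]

end DTree

namespace DPath

variable {S A : Type*}

theorem IsPathOf.action_eq_eval {T : DTree S A} {η : DPath S A} {s : S}
    (hη : η.IsPathOf T) (hs : η.pred s) : η.action = T.eval s := by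
  induction hη with
  | leaf a => rfl
  | node_true _ ih => simp [action, DTree.eval, hs.1, ih hs.2]
  | node_false _ ih => simp [action, DTree.eval, hs.1, ih hs.2]

end DPath

theorem DTree.exists_isPathOf_action_pred_iff {S A : Type*} (T : DTree S A) (s : S) (a : A) :
    (∃ η : DPath S A, η.IsPathOf T ∧ η.action = a ∧ η.pred s) ↔ T.eval s = a := by
  constructor
  · rintro ⟨η, hη, rfl, hs⟩
    exact (hη.action_eq_eval hs).symm
  · rintro rfl
    exact ⟨T.path s, T.path_isPathOf s, T.action_path s, T.pred_path s⟩

/-- Theorem 3, semantic core of the BMC-to-SMT reduction: sequences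
`x : Fin (ℓ+1) → S` and `y : Fin ℓ → A` satisfy the SMT constraints — (1) `x 0 = s₀`,
(2) `x(i+1) ∈ supp(x(i), y(i))` for `i < ℓ`, (3) for all `i < ℓ` and `a ∈ A`, if
`x(i)` satisfies the disjunction of `pred(η)` over root-to-leaf paths `η` of `T`
ending in a leaf labeled `a` then `y(i) = a`, and (4) `x ∈ Ω` — iff `x` is a
length-`ℓ` run of the plant under the tree policy `π_T = eval(T,·)` lying in `Ω`,
with `y(i) = π_T(x(i))` for all `i < ℓ`. -/
theorem bmc_to_smt_correct {S A : Type*} (s₀ : S) (supp : S → A → Set S)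
    (T : DTree S A) (ℓ : ℕ) (Ω : Set (Fin (ℓ + 1) → S))
    (x : Fin (ℓ + 1) → S) (y : Fin ℓ → A) :
    (x 0 = s₀ ∧
      (∀ i : Fin ℓ, x i.succ ∈ supp (x i.castSucc) (y i)) ∧
      (∀ (i : Fin ℓ) (a : A),
        (∃ η : DPath S A, η.IsPathOf T ∧ η.action = a ∧ η.pred (x i.castSucc)) →
        y i = a) ∧
      x ∈ Ω)
    ↔
    (x 0 = s₀ ∧
      (∀ i : Fin ℓ, x i.succ ∈ supp (x i.castSucc) (T.eval (x i.castSucc))) ∧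
      x ∈ Ω ∧
      (∀ i : Fin ℓ, y i = T.eval (x i.castSucc))) := by
  simp only [DTree.exists_isPathOf_action_pred_iff, forall_eq']
  constructor
  · rintro ⟨h₀, hsupp, hy, hΩ⟩
    exact ⟨h₀, fun i => hy i ▸ hsupp i, hΩ, hy⟩
  · rintro ⟨h₀, hsupp, hΩ, hy⟩
    exact ⟨h₀, fun i => (hy i).symm ▸ hsupp i, hy, hΩ⟩
end
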